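/- arXiv:2405.05631 — 2 statements merged into one kernel-verified Lean document; each statement's English description precedes it below -/
import Mathlib

section
/- Under the identification of $\mathfrak{o}_N$ with the exterior square $\Lambda^2\mathbb{C}^N$ given by $F_{ij} \mapsto e_i \wedge e_{-j}$ (where the symmetric form is $G = (\delta_{i,-j})$), the linear map sending the polyvector $e_{-i_1}\wedge\cdots\wedge e_{-i_k}$ (for $I = \{i_1 < \cdots < i_k\}$) to the pfaffian $\mathrm{Pf}\,F_I \in U(\mathfrak{o}_N)$ intertwines the adjoint action of $\mathfrak{o}_N$ on $\Lambda^k\mathbb{C}^N$ with the adjoint action of $\mathfrak{o}_N$ on $U(\mathfrak{o}_N)$: for every $g \in \mathfrak{o}_N$, $[g, \mathrm{Pf}\,F_I]$ equals the image of $g\cdot(e_{-i_1}\wedge\cdots\wedge e_{-i_k})$. -/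
open scoped BigOperators

/-- Index set `{-n, …, n}` for the split orthogonal Lie algebra `o_{2n+1}`. -/
abbrev Idx (n : ℕ) : Type := {i : ℤ // i ∈ Finset.Icc (-(n : ℤ)) (n : ℤ)}

namespace Idx
/-- Negation on the index set. -/
def neg {n : ℕ} (i : Idx n) : Idx n :=
  ⟨-i.1, by have := i.2; simp only [Finset.mem_Icc] at *; omega⟩
end Idx

/-- Noncommutative pfaffian of `F` along an enumeration `e : Fin (2m) → Idx n`:
`Pf = 1/(m! 2^m) ∑_σ sgn σ · F_{-e(σ 1), e(σ 2)} ⋯ F_{-e(σ(2m-1)), e(σ(2m))}`. -/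
noncomputable def PfEnum {A : Type*} [Ring A] [Algebra ℚ A] {n : ℕ}
    (F : Idx n → Idx n → A) (m : ℕ) (e : Fin (2 * m) → Idx n) : A :=
  ((m.factorial : ℚ) * 2 ^ m)⁻¹ •
    ∑ σ : Equiv.Perm (Fin (2 * m)),
      (Equiv.Perm.sign σ : ℤ) •
        (List.ofFn fun t : Fin m =>
          F (Idx.neg (e (σ ⟨2 * t.1, by have := t.2; omega⟩)))
            (e (σ ⟨2 * t.1 + 1, by have := t.2; omega⟩))).prod

/-- Noncommutative pfaffian `Pf F_I` of an (even-cardinality) indexing set `I`,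
using the increasing enumeration of `I`. -/
noncomputable def PfSet {A : Type*} [Ring A] [Algebra ℚ A] {n : ℕ}
    (F : Idx n → Idx n → A) (I : Finset (Idx n)) : A :=
  PfEnum F (I.card / 2) fun t =>
    (I.orderIsoOfFin rfl ⟨t.1, by have := t.2; omega⟩).1

/-- The defining commutation relations of the generators `F_{ij}` of `o_N`. -/
def OrthRel {A : Type*} [Ring A] {n : ℕ} (F : Idx n → Idx n → A) : Prop :=
  ∀ i j k l : Idx n,
    F i j * F k l - F k l * F i j =
      (if k = j then F i l else 0) - (if i = l then F k j else 0)
        - (if Idx.neg k = i then F (Idx.neg j) l else 0)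
        + (if Idx.neg l = j then F k (Idx.neg i) else 0)

/-- The skew-symmetry `F_{ij} = -F_{-j,-i}` of the generators. -/
def OrthSkew {A : Type*} [Ring A] {n : ℕ} (F : Idx n → Idx n → A) : Prop :=
  ∀ i j : Idx n, F i j = - F (Idx.neg j) (Idx.neg i)

/-- Sign of an arrangement (list) of elements of a linearly ordered type:
`(-1)^(number of inversions)`. -/
def arrSign {ι : Type*} [LinearOrder ι] (l : List ι) : ℤ :=
  (-1) ^ (((Finset.univ : Finset (Fin l.length × Fin l.length)).filter
      fun p => p.1 < p.2 ∧ l.get p.2 < l.get p.1).card)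

/-- Shuffle sign `(-1)^{(I'I'')}` of the permutation placing `I'` (in natural order)
before `I''` (in natural order). -/
def shuffleSign {ι : Type*} [LinearOrder ι] (I' I'' : Finset ι) : ℤ :=
  arrSign (I'.sort (· ≤ ·) ++ I''.sort (· ≤ ·))

/-!
Commutation with `g = F_{j₁,-j₂}` is a derivation, so on each monomial
`F_{-a₁,b₁} ⋯ F_{-a_m,b_m}` of the pfaffian it acts factor by factor, and by the defining
relations `[g, F_{-a,b}]` is the sum of the two factors obtained by letting `g` act on the index
`a` and on the index `b`. So the identity already holds for each permuted monomial separately,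
and the pfaffian inherits it by linearity.
-/

namespace List
variable {A : Type*}

theorem ofFn_update {m : ℕ} (f : Fin m → A) (t : Fin m) (x : A) :
    ofFn (Function.update f t x) = (ofFn f).set t x := by
  refine ext_getElem (by simp) fun i h₁ h₂ => ?_
  simp only [List.getElem_ofFn, getElem_set, Function.update_apply, Fin.ext_iff]
  grind

theorem prod_ofFn_update [Monoid A] {m : ℕ} (f : Fin m → A) (t : Fin m) (x : A) :
    (ofFn (Function.update f t x)).prod =
      ((ofFn f).take t).prod * x * ((ofFn f).drop (t + 1)).prod := by
  simp [ofFn_update, prod_set]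

theorem lie_prod [Ring A] (g : A) : ∀ l : List A,
    ⁅g, l.prod⁆ = ∑ i : Fin l.length, (l.set i ⁅g, l[(i : ℕ)]⁆).prod
  | [] => by simp [Ring.lie_def]
  | a :: l => by
    erw [Fin.sum_univ_succ]
    simp only [length_cons, Fin.val_zero, set_cons_zero, Fin.val_succ, set_cons_succ,
      getElem_cons_zero, getElem_cons_succ, prod_cons]
    rw [← Finset.mul_sum, ← lie_prod g l]
    simp only [Ring.lie_def]
    noncomm_ring

theorem lie_prod_ofFn [Ring A] (g : A) {m : ℕ} (f : Fin m → A) :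
    ⁅g, (ofFn f).prod⁆ = ∑ t, (ofFn (Function.update f t ⁅g, f t⁆)).prod := by
  rw [lie_prod, ← Fin.sum_congr' _ (length_ofFn (f := f)).symm]
  simp [ofFn_update]

end List

theorem Fin.sum_univ_two_mul {M : Type*} [AddCommMonoid M] (m : ℕ) (h : Fin (2 * m) → M) :
    ∑ s, h s = ∑ t : Fin m, (h ⟨2 * t, by omega⟩ + h ⟨2 * t + 1, by omega⟩) := by
  rw [← (finProdFinEquiv.trans (finCongr (mul_comm m 2))).sum_comp, Fintype.sum_prod_type]
  refine Finset.sum_congr rfl fun t _ => ?_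
  rw [Fin.sum_univ_two]
  congr 2 <;> ext <;> simp [finProdFinEquiv]; omega

namespace Idx

variable {n : ℕ}

@[simp] theorem neg_neg (i : Idx n) : neg (neg i) = i :=
  Subtype.ext (_root_.neg_neg i.1)

@[simp] theorem neg_inj {i j : Idx n} : neg i = neg j ↔ i = j :=
  ⟨fun h => by simpa using congrArg neg h, congrArg neg⟩

end Idx

section Generators

variable {A : Type*} [Ring A] {n : ℕ} {F : Idx n → Idx n → A}

theorem OrthRel.lie_eq (hrel : OrthRel F) (j1 j2 a b : Idx n) :
    ⁅F j1 (Idx.neg j2), F (Idx.neg a) b⁆ =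
      ((if a = j2 then (1 : ℤ) else 0) • F j1 b - (if a = j1 then (1 : ℤ) else 0) • F j2 b) +
        ((if b = j2 then (1 : ℤ) else 0) • F (Idx.neg a) (Idx.neg j1) -
          (if b = j1 then (1 : ℤ) else 0) • F (Idx.neg a) (Idx.neg j2)) := by
  rw [Ring.lie_def, hrel]
  simp only [Idx.neg_inj, Idx.neg_neg, eq_comm (a := j1), ite_smul, one_smul, zero_smul]
  abel

end Generators

section Pairs

variable {A : Type*} {n : ℕ} (F : Idx n → Idx n → A) {m : ℕ}

def pairFactor (e : Fin (2 * m) → Idx n) (t : Fin m) : A :=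
  F (Idx.neg (e ⟨2 * t, by omega⟩)) (e ⟨2 * t + 1, by omega⟩)

def pairProd [Monoid A] (e : Fin (2 * m) → Idx n) : A :=
  (List.ofFn (pairFactor F e)).prod

theorem pairFactor_update_even (e : Fin (2 * m) → Idx n) (t : Fin m) (v : Idx n) :
    pairFactor F (Function.update e ⟨2 * t, by omega⟩ v) =
      Function.update (pairFactor F e) t (F (Idx.neg v) (e ⟨2 * t + 1, by omega⟩)) := by
  funext s
  by_cases hs : s = t
  · subst hs; simp [pairFactor]
  · have h₁ : (s : ℕ) ≠ t := Fin.val_ne_of_ne hs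
    have h₂ : 2 * (s : ℕ) + 1 ≠ 2 * t := by omega
    simp [pairFactor, hs, h₁, h₂]

theorem pairFactor_update_odd (e : Fin (2 * m) → Idx n) (t : Fin m) (v : Idx n) :
    pairFactor F (Function.update e ⟨2 * t + 1, by omega⟩ v) =
      Function.update (pairFactor F e) t (F (Idx.neg (e ⟨2 * t, by omega⟩)) v) := by
  funext s
  by_cases hs : s = t
  · subst hs; simp [pairFactor]
  · have h₁ : (s : ℕ) ≠ t := Fin.val_ne_of_ne hs
    have h₂ : 2 * (s : ℕ) ≠ 2 * t + 1 := by omega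
    simp [pairFactor, hs, h₁, h₂]

end Pairs

section TensorAction

variable {ι : Type*} [Fintype ι] [DecidableEq ι] {M : Type*} [AddCommGroup M] {n : ℕ}

/-- `F_{j₁,-j₂}` acting by the Leibniz rule on `e_{-e(1)} ⊗ ⋯ ⊗ e_{-e(k)}`, where
`F_{j₁,-j₂} e_{-i} = δ_{i,j₂} e_{-(-j₁)} - δ_{i,j₁} e_{-(-j₂)}`, read through `Φ` extended
linearly from the tensor basis. -/
def tensorAction (j1 j2 : Idx n) (e : ι → Idx n) : ((ι → Idx n) → M) →+ M :=
  ∑ t, ((if e t = j2 then (1 : ℤ) else 0) •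
      Pi.evalAddMonoidHom (fun _ => M) (Function.update e t (Idx.neg j1)) -
    (if e t = j1 then (1 : ℤ) else 0) •
      Pi.evalAddMonoidHom (fun _ => M) (Function.update e t (Idx.neg j2)))

theorem tensorAction_apply (j1 j2 : Idx n) (e : ι → Idx n) (Φ : (ι → Idx n) → M) :
    tensorAction j1 j2 e Φ =
      ∑ t, ((if e t = j2 then (1 : ℤ) else 0) • Φ (Function.update e t (Idx.neg j1)) -
        (if e t = j1 then (1 : ℤ) else 0) • Φ (Function.update e t (Idx.neg j2))) := by
  simp only [tensorAction, AddMonoidHom.finsetSum_apply, AddMonoidHom.sub_apply,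
    AddMonoidHom.smul_apply, Pi.evalAddMonoidHom_apply]

theorem tensorAction_comp_equiv {κ : Type*} [Fintype κ] [DecidableEq κ] (σ : κ ≃ ι)
    (j1 j2 : Idx n) (e : ι → Idx n) (Φ : (κ → Idx n) → M) :
    tensorAction j1 j2 e (fun e' => Φ (e' ∘ σ)) = tensorAction j1 j2 (e ∘ σ) Φ := by
  simp only [tensorAction_apply, Function.update_comp_equiv]
  exact (σ.sum_comp _).symm.trans (by simp)

end TensorAction

theorem OrthRel.lie_pairProd {A : Type*} [Ring A] {n : ℕ} {F : Idx n → Idx n → A}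
    (hrel : OrthRel F) {m : ℕ} (e : Fin (2 * m) → Idx n) (j1 j2 : Idx n) :
    ⁅F j1 (Idx.neg j2), pairProd F e⁆ = tensorAction j1 j2 e (pairProd F) := by
  rw [tensorAction_apply, Fin.sum_univ_two_mul, pairProd, List.lie_prod_ofFn]
  refine Finset.sum_congr rfl fun t _ => ?_
  simp only [pairProd, pairFactor_update_even, pairFactor_update_odd, Idx.neg_neg]
  rw [pairFactor, hrel.lie_eq]
  simp only [List.prod_ofFn_update, mul_add, add_mul, mul_sub, sub_mul, mul_smul_comm,
    smul_mul_assoc]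

theorem statement6_general {A : Type*} [Ring A] [Algebra ℚ A] (n : ℕ)
    (F : Idx n → Idx n → A) (hrel : OrthRel F)
    (m : ℕ) (e : Fin (2 * m) → Idx n) (j1 j2 : Idx n) :
    F j1 (Idx.neg j2) * PfEnum F m e - PfEnum F m e * F j1 (Idx.neg j2) =
      ∑ t : Fin (2 * m),
        ((if e t = j2 then (1 : ℤ) else 0) • PfEnum F m (Function.update e t (Idx.neg j1))
          - (if e t = j1 then (1 : ℤ) else 0) • PfEnum F m (Function.update e t (Idx.neg j2))) := by
  set c : ℚ := ((m.factorial : ℚ) * 2 ^ m)⁻¹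
  have hPf : PfEnum F m =
      c • ∑ σ : Equiv.Perm (Fin (2 * m)), (σ.sign : ℤ) • fun e' => pairProd F (e' ∘ σ) := by
    funext e'
    simp only [PfEnum, Pi.smul_apply, Finset.sum_apply]
    rfl
  rw [← Ring.lie_def, ← tensorAction_apply]
  calc ⁅F j1 (Idx.neg j2), PfEnum F m e⁆
      = c • ∑ σ : Equiv.Perm (Fin (2 * m)),
          (σ.sign : ℤ) • ⁅F j1 (Idx.neg j2), pairProd F (e ∘ σ)⁆ := by
        simp only [hPf, Pi.smul_apply, Finset.sum_apply, Ring.lie_def, Finset.mul_sum,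
          Finset.sum_mul, mul_smul_comm, smul_mul_assoc, ← smul_sub, ← Finset.sum_sub_distrib]
    _ = c • ∑ σ : Equiv.Perm (Fin (2 * m)),
          (σ.sign : ℤ) • tensorAction j1 j2 e (fun e' => pairProd F (e' ∘ σ)) := by
        simp only [hrel.lie_pairProd, tensorAction_comp_equiv]
    _ = tensorAction j1 j2 e (PfEnum F m) := by
        rw [hPf, map_rat_smul, map_sum]
        simp only [map_zsmul]

/-- the map sending the polyvector `e_{-i₁} ∧ ⋯ ∧ e_{-i_k}` to `Pf F_I`
intertwines the natural action of `o_N` on `Λ^k ℂ^N` with the adjoint action on `U(o_N)`.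
Formulated on the generators `g = F_{j₁,-j₂}` (which span `o_N`): the bracket
`[F_{j₁,-j₂}, PfEnum e]` equals the sum over positions `t` of the pfaffian along the
enumeration `e` with the `t`-th entry acted on by `F_{j₁,-j₂}`
(`F_{j₁,-j₂} e_{-i} = δ_{i,j₂} e_{-(-j₁)} - δ_{i,j₁} e_{-(-j₂)}`). -/
theorem statement6 {A : Type*} [Ring A] [Algebra ℚ A] (n : ℕ)
    (F : Idx n → Idx n → A) (hrel : OrthRel F) (hskew : OrthSkew F)
    (m : ℕ) (e : Fin (2 * m) → Idx n) (j1 j2 : Idx n) :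
    F j1 (Idx.neg j2) * PfEnum F m e - PfEnum F m e * F j1 (Idx.neg j2) =
      ∑ t : Fin (2 * m),
        ((if e t = j2 then (1 : ℤ) else 0) • PfEnum F m (Function.update e t (Idx.neg j1))
          - (if e t = j1 then (1 : ℤ) else 0) • PfEnum F m (Function.update e t (Idx.neg j2))) :=
  statement6_general n F hrel m e j1 j2
end

section
/- In the case $N = 2n+1$, the pfaffians $\mathrm{Pf}\,F_{\widehat{n}} := \mathrm{Pf}\,F_{\{-n,\dots,n-1\}}$ and $\mathrm{Pf}\,F_{\widehat{-n}} := \mathrm{Pf}\,F_{\{-n+1,\dots,n\}}$ commute in $U(\mathfrak{o}_{2n+1})$ with all elements $F_{ij}$ with $-n < i, j < n$, i.e. with the subalgebra $\mathfrak{o}_{2n-1}\subset\mathfrak{o}_{2n+1}$. -/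
open scoped BigOperators

section Aux

@[simp] lemma Idx.neg_neg_s7 {n : ℕ} (i : Idx n) : Idx.neg (Idx.neg i) = i :=
  Subtype.ext (by simp [Idx.neg])

lemma Idx.neg_inj_s7 {n : ℕ} {i j : Idx n} : Idx.neg i = Idx.neg j ↔ i = j := by
  constructor
  · intro h; have := congrArg Idx.neg h; simpa using this
  · rintro rfl; rfl

noncomputable def pfterm {A : Type*} [Ring A] {n : ℕ}
    (F : Idx n → Idx n → A) (m : ℕ) (e : Fin (2 * m) → Idx n)
    (σ : Equiv.Perm (Fin (2 * m))) : A :=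
  (List.ofFn fun t : Fin m =>
    F (Idx.neg (e (σ ⟨2 * t.1, by have := t.2; omega⟩)))
      (e (σ ⟨2 * t.1 + 1, by have := t.2; omega⟩))).prod

lemma PfEnum_eq {A : Type*} [Ring A] [Algebra ℚ A] {n : ℕ}
    (F : Idx n → Idx n → A) (m : ℕ) (e : Fin (2 * m) → Idx n) :
    PfEnum F m e = ((m.factorial : ℚ) * 2 ^ m)⁻¹ •
      ∑ σ : Equiv.Perm (Fin (2 * m)), (Equiv.Perm.sign σ : ℤ) • pfterm F m e σ := rfl

lemma pfterm_comp {A : Type*} [Ring A] {n : ℕ}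
    (F : Idx n → Idx n → A) (m : ℕ) (e : Fin (2 * m) → Idx n)
    (π σ : Equiv.Perm (Fin (2 * m))) :
    pfterm F m (e ∘ π) σ = pfterm F m e (π * σ) := rfl

lemma PfEnum_comp_perm {A : Type*} [Ring A] [Algebra ℚ A] {n : ℕ}
    (F : Idx n → Idx n → A) (m : ℕ) (e : Fin (2 * m) → Idx n)
    (π : Equiv.Perm (Fin (2 * m))) :
    PfEnum F m (e ∘ π) = (Equiv.Perm.sign π : ℤ) • PfEnum F m e := by
  have hππ : ((Equiv.Perm.sign π : ℤ) * (Equiv.Perm.sign π : ℤ)) = 1 := by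
    rcases Int.units_eq_one_or (Equiv.Perm.sign π) with h | h <;> simp [h]
  rw [PfEnum_eq, PfEnum_eq, smul_comm]
  congr 1
  have := Fintype.sum_equiv (Equiv.mulLeft π)
    (fun σ => (Equiv.Perm.sign σ : ℤ) • pfterm F m (e ∘ π) σ)
    (fun τ => ((Equiv.Perm.sign π : ℤ) * (Equiv.Perm.sign τ : ℤ)) • pfterm F m e τ)
    (fun σ => by
      simp only [pfterm_comp, Equiv.coe_mulLeft]
      congr 1
      rw [map_mul]
      push_cast
      rw [← mul_assoc, hππ, one_mul])
  rw [this, Finset.smul_sum]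
  exact Finset.sum_congr rfl fun τ _ => (mul_smul _ _ _)

lemma PfEnum_eq_zero_of_dup {A : Type*} [Ring A] [Algebra ℚ A] {n : ℕ}
    (F : Idx n → Idx n → A) (m : ℕ) (e : Fin (2 * m) → Idx n)
    {p p' : Fin (2 * m)} (hne : p ≠ p') (hval : e p = e p') :
    PfEnum F m e = 0 := by
  have hcomp : e ∘ (Equiv.swap p p') = e := by
    funext x
    rcases eq_or_ne x p with rfl | hxp
    · simp [Equiv.swap_apply_left, hval]
    rcases eq_or_ne x p' with rfl | hxp'
    · simp [Equiv.swap_apply_right, hval]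
    · simp [Equiv.swap_apply_of_ne_of_ne hxp hxp']
  have h := PfEnum_comp_perm F m e (Equiv.swap p p')
  rw [hcomp, Equiv.Perm.sign_swap hne] at h
  have h2 : PfEnum F m e + PfEnum F m e = 0 := by
    nth_rewrite 1 [h]; simp
  have : (2 : ℚ) • PfEnum F m e = 0 := by rw [two_smul]; exact h2
  calc PfEnum F m e = (2 : ℚ)⁻¹ • ((2 : ℚ) • PfEnum F m e) := by
        rw [smul_smul, inv_mul_cancel₀ (by norm_num), one_smul]
    _ = 0 := by rw [this, smul_zero]


section ListLemmas
variable {A : Type*} [Ring A]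

lemma comm_list_prod (X : A) : ∀ (l : List A),
    X * l.prod - l.prod * X
      = ∑ k ∈ Finset.range l.length,
          (l.set k (X * l.getD k 0 - l.getD k 0 * X)).prod := by
  intro l
  induction l with
  | nil => simp
  | cons a l ih =>
    rw [List.length_cons, Finset.sum_range_succ']
    simp only [List.getD_cons_succ, List.getD_cons_zero, List.set_cons_succ,
      List.set_cons_zero, List.prod_cons]
    rw [← Finset.mul_sum, ← ih]
    noncomm_ring

omit [Ring A] in
lemma ofFn_update {m : ℕ} (f : Fin m → A) (k : Fin m) (c : A) :
    List.ofFn (Function.update f k c) = (List.ofFn f).set k.1 c := by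
  apply List.ext_getElem (by simp)
  intro i h1 h2
  rw [List.getElem_set]
  simp only [List.getElem_ofFn, Function.update_apply, Fin.ext_iff]
  by_cases h : i = k.1
  · simp [h]
  · simp [h, Ne.symm h]

lemma set_prod_zero {l : List A} {k : ℕ} (hk : k < l.length) :
    (l.set k (0 : A)).prod = 0 := by
  simp [List.prod_set, hk]

lemma set_prod_add {l : List A} {k : ℕ} (hk : k < l.length) (x y : A) :
    (l.set k (x + y)).prod = (l.set k x).prod + (l.set k y).prod := by
  simp [List.prod_set, hk, mul_add, add_mul]

lemma set_prod_sub {l : List A} {k : ℕ} (hk : k < l.length) (x y : A) :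
    (l.set k (x - y)).prod = (l.set k x).prod - (l.set k y).prod := by
  simp [List.prod_set, hk, mul_sub, sub_mul]

lemma set_prod_ite {l : List A} {k : ℕ} (hk : k < l.length) (P : Prop) [Decidable P] (x : A) :
    (l.set k (if P then x else 0)).prod = if P then (l.set k x).prod else 0 := by
  split_ifs with h
  · rfl
  · exact set_prod_zero hk

end ListLemmas

lemma sum_range_two_mul {M : Type*} [AddCommMonoid M] (m : ℕ) (h : ℕ → M) :
    ∑ s ∈ Finset.range (2 * m), h s = ∑ k ∈ Finset.range m, (h (2 * k) + h (2 * k + 1)) := by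
  induction m with
  | zero => simp
  | succ m ih =>
    have h2 : 2 * (m + 1) = 2 * m + 1 + 1 := by omega
    rw [h2, Finset.sum_range_succ, Finset.sum_range_succ, ih, Finset.sum_range_succ, add_assoc]

lemma sum_fin_two_mul {M : Type*} [AddCommMonoid M] (m : ℕ) (H : Fin (2 * m) → M) :
    ∑ s, H s = ∑ k : Fin m, (H ⟨2 * k.1, by have := k.2; omega⟩
      + H ⟨2 * k.1 + 1, by have := k.2; omega⟩) := by
  have key : ∀ (N : ℕ) (G : Fin N → M),
      ∑ s, G s = ∑ s ∈ Finset.range N, (if hs : s < N then G ⟨s, hs⟩ else 0) := by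
    intro N G
    rw [← Fin.sum_univ_eq_sum_range]
    exact Finset.sum_congr rfl fun s _ => by simp [s.2]
  rw [key (2 * m) H, sum_range_two_mul, ← Fin.sum_univ_eq_sum_range
    (fun k => (if hs : 2 * k < 2 * m then H ⟨2 * k, hs⟩ else 0)
      + (if hs : 2 * k + 1 < 2 * m then H ⟨2 * k + 1, hs⟩ else 0))]
  exact Finset.sum_congr rfl fun k _ => by
    have hk := k.2
    rw [dif_pos (by omega), dif_pos (by omega)]
variable {A : Type*} [Ring A] {n : ℕ}

lemma pfterm_update_even (F : Idx n → Idx n → A) (m : ℕ) (e : Fin (2 * m) → Idx n)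
    (σ : Equiv.Perm (Fin (2 * m))) (k : Fin m) (v : Idx n) :
    pfterm F m (Function.update e (σ ⟨2 * k.1, by have := k.2; omega⟩) v) σ
      = ((List.ofFn fun t : Fin m =>
            F (Idx.neg (e (σ ⟨2 * t.1, by have := t.2; omega⟩)))
              (e (σ ⟨2 * t.1 + 1, by have := t.2; omega⟩))).set k.1
          (F (Idx.neg v) (e (σ ⟨2 * k.1 + 1, by have := k.2; omega⟩)))).prod := by
  rw [← ofFn_update]
  unfold pfterm
  congr 1
  congr 1
  funext t
  rcases eq_or_ne t k with rfl | htk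
  · have h1 : σ ⟨2 * t.1 + 1, by have := t.2; omega⟩
        ≠ σ (⟨2 * t.1, by have := t.2; omega⟩ : Fin (2 * m)) := by
      intro hc
      have := σ.injective hc
      simp only [Fin.mk.injEq] at this
      omega
    simp only [Function.update_self]
    rw [Function.update_of_ne h1]
  · have htk' : t.1 ≠ k.1 := fun h => htk (Fin.ext h)
    have h2 : σ (⟨2 * t.1, by have := t.2; omega⟩ : Fin (2 * m))
        ≠ σ ⟨2 * k.1, by have := k.2; omega⟩ := by
      intro hc
      have := σ.injective hc
      simp only [Fin.mk.injEq] at this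
      omega
    have h3 : σ (⟨2 * t.1 + 1, by have := t.2; omega⟩ : Fin (2 * m))
        ≠ σ ⟨2 * k.1, by have := k.2; omega⟩ := by
      intro hc
      have := σ.injective hc
      simp only [Fin.mk.injEq] at this
      omega
    rw [Function.update_of_ne htk, Function.update_of_ne h2, Function.update_of_ne h3]

lemma pfterm_update_odd (F : Idx n → Idx n → A) (m : ℕ) (e : Fin (2 * m) → Idx n)
    (σ : Equiv.Perm (Fin (2 * m))) (k : Fin m) (v : Idx n) :
    pfterm F m (Function.update e (σ ⟨2 * k.1 + 1, by have := k.2; omega⟩) v) σ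
      = ((List.ofFn fun t : Fin m =>
            F (Idx.neg (e (σ ⟨2 * t.1, by have := t.2; omega⟩)))
              (e (σ ⟨2 * t.1 + 1, by have := t.2; omega⟩))).set k.1
          (F (Idx.neg (e (σ ⟨2 * k.1, by have := k.2; omega⟩))) v)).prod := by
  rw [← ofFn_update]
  unfold pfterm
  congr 1
  congr 1
  funext t
  rcases eq_or_ne t k with rfl | htk
  · have h1 : σ (⟨2 * t.1, by have := t.2; omega⟩ : Fin (2 * m))
        ≠ σ ⟨2 * t.1 + 1, by have := t.2; omega⟩ := by
      intro hc
      have := σ.injective hc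
      simp only [Fin.mk.injEq] at this
      omega
    simp only [Function.update_self]
    rw [Function.update_of_ne h1]
  · have htk' : t.1 ≠ k.1 := fun h => htk (Fin.ext h)
    have h2 : σ (⟨2 * t.1, by have := t.2; omega⟩ : Fin (2 * m))
        ≠ σ ⟨2 * k.1 + 1, by have := k.2; omega⟩ := by
      intro hc
      have := σ.injective hc
      simp only [Fin.mk.injEq] at this
      omega
    have h3 : σ (⟨2 * t.1 + 1, by have := t.2; omega⟩ : Fin (2 * m))
        ≠ σ ⟨2 * k.1 + 1, by have := k.2; omega⟩ := by
      intro hc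
      have := σ.injective hc
      simp only [Fin.mk.injEq] at this
      omega
    rw [Function.update_of_ne htk, Function.update_of_ne h2, Function.update_of_ne h3]
lemma Idx.neg_eq_iff {n : ℕ} {a b : Idx n} : Idx.neg a = b ↔ a = Idx.neg b :=
  ⟨fun h => by rw [← h, Idx.neg_neg_s7], fun h => by rw [h, Idx.neg_neg_s7]⟩

variable {A : Type*} [Ring A] {n : ℕ}

lemma pfterm_comm_slot (F : Idx n → Idx n → A) (hrel : OrthRel F) {m : ℕ}
    (e : Fin (2 * m) → Idx n) (i j : Idx n) (σ : Equiv.Perm (Fin (2 * m))) (k : Fin m) :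
    ((List.ofFn fun t : Fin m =>
        F (Idx.neg (e (σ ⟨2 * t.1, by have := t.2; omega⟩)))
          (e (σ ⟨2 * t.1 + 1, by have := t.2; omega⟩))).set k.1
      (F i j * F (Idx.neg (e (σ ⟨2 * k.1, by have := k.2; omega⟩)))
          (e (σ ⟨2 * k.1 + 1, by have := k.2; omega⟩))
        - F (Idx.neg (e (σ ⟨2 * k.1, by have := k.2; omega⟩)))
            (e (σ ⟨2 * k.1 + 1, by have := k.2; omega⟩)) * F i j)).prod
    = ((if e (σ ⟨2 * k.1, by have := k.2; omega⟩) = Idx.neg j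
          then pfterm F m (Function.update e (σ ⟨2 * k.1, by have := k.2; omega⟩) (Idx.neg i)) σ else 0)
        - (if e (σ ⟨2 * k.1, by have := k.2; omega⟩) = i
          then pfterm F m (Function.update e (σ ⟨2 * k.1, by have := k.2; omega⟩) j) σ else 0))
      + ((if e (σ ⟨2 * k.1 + 1, by have := k.2; omega⟩) = Idx.neg j
          then pfterm F m (Function.update e (σ ⟨2 * k.1 + 1, by have := k.2; omega⟩) (Idx.neg i)) σ else 0)
        - (if e (σ ⟨2 * k.1 + 1, by have := k.2; omega⟩) = i
          then pfterm F m (Function.update e (σ ⟨2 * k.1 + 1, by have := k.2; omega⟩) j) σ else 0)) := by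
  set a := e (σ ⟨2 * k.1, by have := k.2; omega⟩) with ha
  set b := e (σ ⟨2 * k.1 + 1, by have := k.2; omega⟩) with hb
  have hk : k.1 < (List.ofFn fun t : Fin m =>
      F (Idx.neg (e (σ ⟨2 * t.1, by have := t.2; omega⟩)))
        (e (σ ⟨2 * t.1 + 1, by have := t.2; omega⟩))).length := by
    simpa using k.2
  have hbr := hrel i j (Idx.neg a) b
  rw [Idx.neg_neg_s7] at hbr
  simp only [Idx.neg_eq_iff] at hbr
  simp only [show ((i : Idx n) = b) ↔ (b = i) from eq_comm] at hbr
  rw [hbr, set_prod_add hk, set_prod_sub hk, set_prod_sub hk,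
    set_prod_ite hk, set_prod_ite hk, set_prod_ite hk, set_prod_ite hk]
  rw [pfterm_update_even F m e σ k (Idx.neg i), pfterm_update_even F m e σ k j,
    pfterm_update_odd F m e σ k (Idx.neg i), pfterm_update_odd F m e σ k j]
  rw [Idx.neg_neg_s7]
  abel

lemma pfterm_comm (F : Idx n → Idx n → A) (hrel : OrthRel F) {m : ℕ}
    (e : Fin (2 * m) → Idx n) (i j : Idx n) (σ : Equiv.Perm (Fin (2 * m))) :
    F i j * pfterm F m e σ - pfterm F m e σ * F i j
      = ∑ p : Fin (2 * m),
          ((if e p = Idx.neg j then pfterm F m (Function.update e p (Idx.neg i)) σ else 0)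
           - (if e p = i then pfterm F m (Function.update e p j) σ else 0)) := by
  classical
  set G : Fin (2 * m) → A := fun p =>
    (if e p = Idx.neg j then pfterm F m (Function.update e p (Idx.neg i)) σ else 0)
    - (if e p = i then pfterm F m (Function.update e p j) σ else 0) with hG
  rw [← Equiv.sum_comp σ G, sum_fin_two_mul m (fun s => G (σ s))]
  unfold pfterm
  rw [comm_list_prod]
  rw [List.length_ofFn]
  rw [← Fin.sum_univ_eq_sum_range]
  refine Finset.sum_congr rfl fun k _ => ?_
  have hk : k.1 < (List.ofFn fun t : Fin m =>
      F (Idx.neg (e (σ ⟨2 * t.1, by have := t.2; omega⟩)))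
        (e (σ ⟨2 * t.1 + 1, by have := t.2; omega⟩))).length := by
    simpa using k.2
  have hget : (List.ofFn fun t : Fin m =>
      F (Idx.neg (e (σ ⟨2 * t.1, by have := t.2; omega⟩)))
        (e (σ ⟨2 * t.1 + 1, by have := t.2; omega⟩))).getD k.1 0
      = F (Idx.neg (e (σ ⟨2 * k.1, by have := k.2; omega⟩)))
          (e (σ ⟨2 * k.1 + 1, by have := k.2; omega⟩)) := by
    rw [List.getD_eq_getElem _ _ hk, List.getElem_ofFn]
  rw [hget, pfterm_comm_slot F hrel e i j σ k]

variable {A : Type*} [Ring A] [Algebra ℚ A] {n : ℕ}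

lemma PfEnum_comm_sum (F : Idx n → Idx n → A) (hrel : OrthRel F) {m : ℕ}
    (e : Fin (2 * m) → Idx n) (i j : Idx n) :
    F i j * PfEnum F m e - PfEnum F m e * F i j
      = ∑ p : Fin (2 * m),
          ((if e p = Idx.neg j then PfEnum F m (Function.update e p (Idx.neg i)) else 0)
           - (if e p = i then PfEnum F m (Function.update e p j) else 0)) := by
  classical
  have h1 : F i j * PfEnum F m e - PfEnum F m e * F i j
      = ((m.factorial : ℚ) * 2 ^ m)⁻¹ •
          ∑ σ : Equiv.Perm (Fin (2 * m)), (Equiv.Perm.sign σ : ℤ) •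
            (F i j * pfterm F m e σ - pfterm F m e σ * F i j) := by
    rw [PfEnum_eq, mul_smul_comm, smul_mul_assoc, ← smul_sub, Finset.mul_sum, Finset.sum_mul,
      ← Finset.sum_sub_distrib]
    congr 1
    refine Finset.sum_congr rfl fun σ _ => ?_
    rw [mul_smul_comm, smul_mul_assoc, ← smul_sub]
  rw [h1]
  have h2 : ∀ σ : Equiv.Perm (Fin (2 * m)),
      (Equiv.Perm.sign σ : ℤ) • (F i j * pfterm F m e σ - pfterm F m e σ * F i j)
        = ∑ p : Fin (2 * m),
            ((if e p = Idx.neg j then (Equiv.Perm.sign σ : ℤ) •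
                pfterm F m (Function.update e p (Idx.neg i)) σ else 0)
             - (if e p = i then (Equiv.Perm.sign σ : ℤ) •
                pfterm F m (Function.update e p j) σ else 0)) := by
    intro σ
    rw [pfterm_comm F hrel e i j σ, Finset.smul_sum]
    refine Finset.sum_congr rfl fun p _ => ?_
    rw [smul_sub]
    congr 1 <;> (split_ifs <;> simp)
  simp only [h2]
  rw [Finset.sum_comm, Finset.smul_sum]
  refine Finset.sum_congr rfl fun p _ => ?_
  rw [Finset.sum_sub_distrib, smul_sub]
  congr 1
  · split_ifs with h
    · rw [PfEnum_eq]
    · simp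
  · split_ifs with h
    · rw [PfEnum_eq]
    · simp

lemma PfEnum_commute (F : Idx n → Idx n → A) (hrel : OrthRel F) {m : ℕ}
    (e : Fin (2 * m) → Idx n) (he : Function.Injective e) (i j : Idx n)
    (hi : ∃ p, e p = i) (hj : ∃ p, e p = j)
    (hni : ∃ p, e p = Idx.neg i) (hnj : ∃ p, e p = Idx.neg j) :
    Commute (PfEnum F m e) (F i j) := by
  classical
  have key : F i j * PfEnum F m e - PfEnum F m e * F i j = 0 := by
    rw [PfEnum_comm_sum F hrel e i j]
    rcases eq_or_ne i j with rfl | hij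
    · obtain ⟨p₀, hp₀⟩ := hni
      obtain ⟨p₁, hp₁⟩ := hi
      have hA : ∀ p : Fin (2 * m),
          (if e p = Idx.neg i then PfEnum F m (Function.update e p (Idx.neg i)) else 0)
            = (if e p = Idx.neg i then PfEnum F m e else 0) := by
        intro p
        split_ifs with h
        · rw [← h, Function.update_eq_self]
        · rfl
      have hB : ∀ p : Fin (2 * m),
          (if e p = i then PfEnum F m (Function.update e p i) else 0)
            = (if e p = i then PfEnum F m e else 0) := by
        intro p
        split_ifs with h
        · rw [← h, Function.update_eq_self]
        · rfl
      simp only [hA, hB]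
      rw [Finset.sum_sub_distrib]
      rw [Finset.sum_eq_single_of_mem p₀ (Finset.mem_univ _)
          (fun p _ hp => if_neg (fun hc => hp (he (hc.trans hp₀.symm)))),
        Finset.sum_eq_single_of_mem p₁ (Finset.mem_univ _)
          (fun p _ hp => if_neg (fun hc => hp (he (hc.trans hp₁.symm)))),
        if_pos hp₀, if_pos hp₁, sub_self]
    · apply Finset.sum_eq_zero
      intro p _
      obtain ⟨p₁, hp₁⟩ := hni
      obtain ⟨p₂, hp₂⟩ := hj
      have hterm1 : (if e p = Idx.neg j then
          PfEnum F m (Function.update e p (Idx.neg i)) else 0) = 0 := by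
        split_ifs with h
        · have hpne : p₁ ≠ p := by
            intro hc
            apply hij
            have : Idx.neg i = Idx.neg j := by rw [← hp₁, hc, h]
            exact Idx.neg_inj_s7.mp this
          refine PfEnum_eq_zero_of_dup F m _ (Ne.symm hpne) ?_
          rw [Function.update_self, Function.update_of_ne hpne, hp₁]
        · rfl
      have hterm2 : (if e p = i then
          PfEnum F m (Function.update e p j) else 0) = 0 := by
        split_ifs with h
        · have hpne : p₂ ≠ p := by
            intro hc
            apply hij
            rw [← h, ← hp₂, hc]
          refine PfEnum_eq_zero_of_dup F m _ (Ne.symm hpne) ?_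
          rw [Function.update_self, Function.update_of_ne hpne, hp₂]
        · rfl
      rw [hterm1, hterm2, sub_zero]
  exact (sub_eq_zero.mp key).symm
variable {A : Type*} [Ring A] [Algebra ℚ A] {n : ℕ}

lemma PfSet_commute (F : Idx n → Idx n → A) (hrel : OrthRel F) (I : Finset (Idx n))
    (hcard : ∃ k, I.card = 2 * k) (i j : Idx n)
    (hi : i ∈ I) (hj : j ∈ I) (hni : Idx.neg i ∈ I) (hnj : Idx.neg j ∈ I) :
    Commute (PfSet F I) (F i j) := by
  obtain ⟨k, hk⟩ := hcard
  have h2 : 2 * (I.card / 2) = I.card := by omega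
  have hexists : ∀ v : Idx n, v ∈ I → ∃ p : Fin (2 * (I.card / 2)),
      ((I.orderIsoOfFin rfl ⟨p.1, by have := p.2; omega⟩).1 : Idx n) = v := by
    intro v hv
    obtain ⟨q, hq⟩ := (I.orderIsoOfFin rfl).surjective ⟨v, hv⟩
    refine ⟨⟨q.1, by have := q.2; omega⟩, ?_⟩
    have hq' : (⟨(⟨q.1, by have := q.2; omega⟩ : Fin (2 * (I.card / 2))).1,
        by have := q.2; omega⟩ : Fin I.card) = q := Fin.ext rfl
    rw [hq', hq]
  apply PfEnum_commute F hrel _ ?_ i j (hexists i hi) (hexists j hj)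
    (hexists _ hni) (hexists _ hnj)
  intro p q h
  have h' : (I.orderIsoOfFin rfl ⟨p.1, by have := p.2; omega⟩)
      = (I.orderIsoOfFin rfl ⟨q.1, by have := q.2; omega⟩) := Subtype.ext h
  have hval := (I.orderIsoOfFin rfl).injective h'
  have : p.1 = q.1 := congrArg (fun x : Fin I.card => x.1) hval
  exact Fin.ext this

end Aux

/-- in `U(o_{2n+1})`, the pfaffians `Pf F_{n̂} = Pf F_{{-n,…,n-1}}` and
`Pf F_{-n̂} = Pf F_{{-n+1,…,n}}` commute with all elements `F_{ij}`, `-n < i, j < n`,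
i.e. with the subalgebra `o_{2n-1}`. -/
theorem statement7 {A : Type*} [Ring A] [Algebra ℚ A] (n : ℕ)
    (F : Idx n → Idx n → A) (hrel : OrthRel F) (hskew : OrthSkew F)
    (i j : Idx n) (hi1 : -(n : ℤ) < i.1) (hi2 : i.1 < (n : ℤ))
    (hj1 : -(n : ℤ) < j.1) (hj2 : j.1 < (n : ℤ)) :
    Commute (PfSet F (Finset.univ.filter fun x : Idx n => x.1 ≠ (n : ℤ))) (F i j) ∧
    Commute (PfSet F (Finset.univ.filter fun x : Idx n => x.1 ≠ -(n : ℤ))) (F i j) := by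
  classical
  have huniv : (Finset.univ : Finset (Idx n)).card = 2 * n + 1 := by
    rw [Finset.card_univ, Fintype.card_coe, Int.card_Icc]
    omega
  have hcards : ∀ c : ℤ, c ∈ Finset.Icc (-(n : ℤ)) (n : ℤ) →
      (Finset.univ.filter fun x : Idx n => x.1 = c).card = 1 := by
    intro c hc
    rw [show (Finset.univ.filter fun x : Idx n => x.1 = c) = {(⟨c, hc⟩ : Idx n)} from ?_,
      Finset.card_singleton]
    ext x
    simp [Subtype.ext_iff]
  have hkey : ∀ c : ℤ, c ∈ Finset.Icc (-(n : ℤ)) (n : ℤ) →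
      (Finset.univ.filter fun x : Idx n => x.1 ≠ c).card = 2 * n := by
    intro c hc
    have h1 := Finset.card_filter_add_card_filter_not
      (s := (Finset.univ : Finset (Idx n))) (p := fun x : Idx n => x.1 = c)
    rw [huniv, hcards c hc] at h1
    have h2 : (Finset.univ.filter fun x : Idx n => x.1 ≠ c).card
        = (Finset.univ.filter fun x : Idx n => ¬ (x.1 = c)).card := rfl
    omega
  have hn : (n : ℤ) ∈ Finset.Icc (-(n : ℤ)) (n : ℤ) := by
    simp only [Finset.mem_Icc]; omega
  have hmn : (-(n : ℤ)) ∈ Finset.Icc (-(n : ℤ)) (n : ℤ) := by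
    simp only [Finset.mem_Icc]; omega
  have hmem : ∀ (c : ℤ), ∀ v : Idx n, v.1 ≠ c →
      v ∈ Finset.univ.filter (fun x : Idx n => x.1 ≠ c) := fun c v hv =>
    Finset.mem_filter.mpr ⟨Finset.mem_univ _, hv⟩
  have hnegi : (Idx.neg i).1 = -i.1 := rfl
  have hnegj : (Idx.neg j).1 = -j.1 := rfl
  constructor
  · exact PfSet_commute F hrel _ ⟨n, hkey _ hn⟩ i j
      (hmem ((n : ℕ) : ℤ) i (by omega)) (hmem ((n : ℕ) : ℤ) j (by omega))
      (hmem ((n : ℕ) : ℤ) (Idx.neg i) (by omega)) (hmem ((n : ℕ) : ℤ) (Idx.neg j) (by omega))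
  · exact PfSet_commute F hrel _ ⟨n, hkey _ hmn⟩ i j
      (hmem (-((n : ℕ) : ℤ)) i (by omega)) (hmem (-((n : ℕ) : ℤ)) j (by omega))
      (hmem (-((n : ℕ) : ℤ)) (Idx.neg i) (by omega)) (hmem (-((n : ℕ) : ℤ)) (Idx.neg j) (by omega))
end
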